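/- Assume condition (O). Then for all a, b ∈ A, M(Θ(a,b)) = M(a) ↔ M(b), that is, {μ ∈ Cm : (a,b) ∈ μ} = Cm \ ((M(a) Δ M(b))↓). (This is Proposition 15 of the paper: under congruence orderability of all quotients, the principal congruence Θ(a,b) is represented by the Heyting-algebra equivalence of the upsets M(a) and M(b) in the lattice of upward closed subsets of the poset Cm.) -/

import Mathlib

variable {A : Type*}

/-- `η` is a completely meet irreducible member of `C`, with (unique) cover `p` in `C`. -/
def IsCMI (C : Set (Setoid A)) (η p : Setoid A) : Prop :=
  η ∈ C ∧ p ∈ C ∧ η < p ∧ ∀ β ∈ C, η < β → p ≤ β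

/-- A single up or down transposition between the intervals `I[pq.1, pq.2]`
and `I[rs.1, rs.2]` of `C`. -/
def Persp (C : Set (Setoid A)) (pq rs : Setoid A × Setoid A) : Prop :=
  pq.1 ∈ C ∧ pq.2 ∈ C ∧ rs.1 ∈ C ∧ rs.2 ∈ C ∧
    ((pq.1 = pq.2 ⊓ rs.1 ∧ rs.2 = pq.2 ⊔ rs.1) ∨
      (rs.1 = rs.2 ⊓ pq.1 ∧ pq.2 = rs.2 ⊔ pq.1))

/-- Projectivity of intervals of `C`: a finite chain of up and down transpositions. -/
def Projective (C : Set (Setoid A)) : Setoid A × Setoid A → Setoid A × Setoid A → Prop :=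
  Relation.ReflTransGen (Persp C)

/-- Prime interval projectivity `φ ∼ ψ`: the prime intervals `I[φ,φ⁺]` and `I[ψ,ψ⁺]`
over completely meet irreducible members of `C` are projective. -/
def PIP (C : Set (Setoid A)) (φ ψ : Setoid A) : Prop :=
  ∃ p q, IsCMI C φ p ∧ IsCMI C ψ q ∧ Projective C (φ, p) (ψ, q)

/-- `Θ(a,b)`: the least member of `C` containing the pair `(a, b)`. -/
def theta (C : Set (Setoid A)) (a b : A) : Setoid A :=
  sInf {s | s ∈ C ∧ s.r a b}

/-- The relation `φ • ψ`: the pairs of `p = φ⁺ = ψ⁺` on which `φ` and `ψ` agree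
(the complement of the symmetric difference of `φ` and `ψ` intersected with `p`). -/
def Bul (p φ ψ : Setoid A) (x y : A) : Prop :=
  p.r x y ∧ (φ.r x y ↔ ψ.r x y)

/-- The set of completely meet irreducible members of `C`. -/
def CmSet (C : Set (Setoid A)) : Set (Setoid A) := {μ | ∃ p, IsCMI C μ p}

/-- `M(a) = {μ ∈ Cm : (1,a) ∈ μ}`. -/
def MsetA (C : Set (Setoid A)) (one a : A) : Set (Setoid A) :=
  {μ | μ ∈ CmSet C ∧ μ.r one a}

/-- The downward closure `X↓` of `X` inside the poset `Cm`. -/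
def DownCl (C : Set (Setoid A)) (X : Set (Setoid A)) : Set (Setoid A) :=
  {μ | μ ∈ CmSet C ∧ ∃ φ ∈ X, μ ≤ φ}

/-- The equivalence operation `S ↔ T := Cm \ ((S Δ T)↓)` of the Heyting algebra of
upward closed subsets of `Cm`. -/
def EqOpU (C : Set (Setoid A)) (S T : Set (Setoid A)) : Set (Setoid A) :=
  CmSet C \ DownCl C ((S \ T) ∪ (T \ S))

/-!
A completely meet irreducible `μ ⊇ (a,b)` cannot separate `M(a)` from `M(b)` above itself, by
transitivity. Conversely, if no completely meet irreducible `φ ≥ μ` lies in `M(a) Δ M(b)`, then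
`μ ⊔ Θ(1,a) = μ ⊔ Θ(1,b)`: otherwise, say `(1,b) ∉ μ ⊔ Θ(1,a)`, and Zorn's lemma (the join of
a chain in `C` is its union) extends `μ ⊔ Θ(1,a)` to a member `φ` of `C` maximal among those
avoiding `(1,b)`; such a `φ` is completely meet irreducible with cover `φ ⊔ Θ(1,b)`, and it
lies in `M(a) \ M(b)`. Condition (O) then gives `(a,b) ∈ μ`.
-/

variable {C : Set (Setoid A)}

lemma sup_mem_of_sSup_mem (hSup : ∀ S ⊆ C, sSup S ∈ C) {s t : Setoid A} (hs : s ∈ C)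
    (ht : t ∈ C) : s ⊔ t ∈ C :=
  sSup_pair (a := s) (b := t) ▸ hSup _ (Set.pair_subset hs ht)

lemma theta_mem (hInf : ∀ S ⊆ C, sInf S ∈ C) (a b : A) : theta C a b ∈ C :=
  hInf _ fun _ hs => hs.1

lemma rel_theta (a b : A) : (theta C a b).r a b := fun _ hs => hs.2

lemma theta_le {s : Setoid A} (hs : s ∈ C) {a b : A} (hab : s.r a b) : theta C a b ≤ s :=
  sInf_le ⟨hs, hab⟩

lemma isCMI_sup_theta_of_maximal (hInf : ∀ S ⊆ C, sInf S ∈ C) (hSup : ∀ S ⊆ C, sSup S ∈ C)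
    {x y : A} {m : Setoid A} (hm : Maximal (fun φ => φ ∈ C ∧ ¬ φ.r x y) m) :
    IsCMI C m (m ⊔ theta C x y) := by
  obtain ⟨hmC, hmxy⟩ := hm.prop
  refine ⟨hmC, sup_mem_of_sSup_mem hSup hmC (theta_mem hInf x y), ?_, fun β hβ hmβ => ?_⟩
  · refine lt_of_le_of_ne le_sup_left fun h => hmxy ?_
    exact h ▸ (le_sup_right : theta C x y ≤ _) (rel_theta x y)
  · have hβxy : β.r x y := by
      by_contra hβxy
      exact hmβ.ne (hm.eq_of_le ⟨hβ, hβxy⟩ hmβ.le)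
    exact sup_le hmβ.le (theta_le hβ hβxy)

lemma exists_mem_cmSet_le_not_rel (hInf : ∀ S ⊆ C, sInf S ∈ C) (hSup : ∀ S ⊆ C, sSup S ∈ C)
    (hDir : ∀ D ⊆ C, D.Nonempty → DirectedOn (· ≤ ·) D →
      ∀ x y : A, (sSup D).r x y ↔ ∃ s ∈ D, s.r x y)
    {γ : Setoid A} (hγ : γ ∈ C) {x y : A} (hxy : ¬ γ.r x y) :
    ∃ φ ∈ CmSet C, γ ≤ φ ∧ ¬ φ.r x y := by
  have hchain : ∀ c ⊆ {φ | φ ∈ C ∧ ¬ φ.r x y}, IsChain (· ≤ ·) c → ∀ ψ ∈ c,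
      ∃ ub ∈ {φ | φ ∈ C ∧ ¬ φ.r x y}, ∀ z ∈ c, z ≤ ub := by
    intro c hc hc_chain ψ hψ
    refine ⟨sSup c, ⟨hSup _ fun z hz => (hc hz).1, ?_⟩, fun z hz => le_sSup hz⟩
    rw [hDir c (fun z hz => (hc hz).1) ⟨ψ, hψ⟩ hc_chain.directedOn]
    rintro ⟨z, hz, hzxy⟩
    exact (hc hz).2 hzxy
  obtain ⟨m, hγm, hm⟩ := zorn_le_nonempty₀ _ hchain γ ⟨hγ, hxy⟩
  exact ⟨m, ⟨_, isCMI_sup_theta_of_maximal hInf hSup hm⟩, hγm, hm.prop.2⟩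

lemma sup_theta_le_sup_theta (one : A) (hInf : ∀ S ⊆ C, sInf S ∈ C)
    (hSup : ∀ S ⊆ C, sSup S ∈ C)
    (hDir : ∀ D ⊆ C, D.Nonempty → DirectedOn (· ≤ ·) D →
      ∀ x y : A, (sSup D).r x y ↔ ∃ s ∈ D, s.r x y)
    {μ : Setoid A} (hμ : μ ∈ C) {a b : A}
    (hab : ∀ φ ∈ CmSet C, μ ≤ φ → φ.r one a → φ.r one b) :
    μ ⊔ theta C one b ≤ μ ⊔ theta C one a := by
  have hsup_mem : μ ⊔ theta C one a ∈ C := sup_mem_of_sSup_mem hSup hμ (theta_mem hInf one a)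
  refine sup_le le_sup_left (theta_le hsup_mem ?_)
  by_contra hb
  obtain ⟨φ, hφ, hle, hφb⟩ := exists_mem_cmSet_le_not_rel hInf hSup hDir hsup_mem hb
  exact hφb <| hab φ hφ (le_sup_left.trans hle) <| (le_sup_right.trans hle) (rel_theta one a)

lemma rel_one_iff_of_rel (one : A) {φ : Setoid A} {a b : A} (hab : φ.r a b) :
    φ.r one a ↔ φ.r one b :=
  ⟨fun h => φ.trans' h hab, fun h => φ.trans' h (φ.symm' hab)⟩

/-- Proposition 15 (Section 4): under (O),
`M(Θ(a,b)) = {μ ∈ Cm : (a,b) ∈ μ} = M(a) ↔ M(b) = Cm \ ((M(a) Δ M(b))↓)`. -/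
theorem stmt5 (one : A) (C : Set (Setoid A))
    (hInf : ∀ S ⊆ C, sInf S ∈ C) (hSup : ∀ S ⊆ C, sSup S ∈ C)
    (hDir : ∀ D ⊆ C, D.Nonempty → DirectedOn (· ≤ ·) D →
      ∀ x y : A, (sSup D).r x y ↔ ∃ s ∈ D, s.r x y)
    (hO : ∀ α ∈ C, ∀ a b : A, α ⊔ theta C one a = α ⊔ theta C one b ↔ α.r a b) :
    ∀ a b : A, {μ | μ ∈ CmSet C ∧ μ.r a b} = EqOpU C (MsetA C one a) (MsetA C one b) := by
  intro a b
  ext μ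
  refine ⟨fun ⟨hμ, hab⟩ => ⟨hμ, ?_⟩, fun ⟨hμ, hnot⟩ => ⟨hμ, ?_⟩⟩
  · rintro ⟨-, φ, hφ, hle⟩
    have hiff := rel_one_iff_of_rel one (hle hab)
    rcases hφ with ⟨⟨hφ, ha⟩, hb⟩ | ⟨⟨hφ, hb⟩, ha⟩
    · exact hb ⟨hφ, hiff.mp ha⟩
    · exact ha ⟨hφ, hiff.mpr hb⟩
  · have hμC : μ ∈ C := hμ.choose_spec.1
    refine (hO μ hμC a b).mp (le_antisymm ?_ ?_)
    · refine sup_theta_le_sup_theta one hInf hSup hDir hμC fun φ hφ hle hb => ?_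
      by_contra ha
      exact hnot ⟨hμ, φ, Or.inr ⟨⟨hφ, hb⟩, fun h => ha h.2⟩, hle⟩
    · refine sup_theta_le_sup_theta one hInf hSup hDir hμC fun φ hφ hle ha => ?_
      by_contra hb
      exact hnot ⟨hμ, φ, Or.inl ⟨⟨hφ, ha⟩, fun h => hb h.2⟩, hle⟩
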